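/- arXiv:1804.10880 — 2 statements merged into one kernel-verified Lean document; each statement's English description precedes it below -/
import Mathlib

section
/- Let L(t) = (1-t)\cos(\pi/(1-t)) for t \in [0,1) and L(t)=0 for t \in [1,2], and let U(t) = L(t) + (1-t)/2 for t \in [0,1) and U(t)=1 for t\in[1,2). Then for every function Y : [0,2] \to \mathbb{R} with L(t) \le Y(t) \le U(t) for all t \in [0,2], the total variation of Y on [0,1] is infinite. -/
open Real Set

/-- The lower barrier from Example 3.1. -/
noncomputable def L₁ (t : ℝ) : ℝ :=
  if t < 1 then (1 - t) * Real.cos (Real.pi / (1 - t)) else 0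

/-- The upper barrier from Example 3.1. -/
noncomputable def U₁ (t : ℝ) : ℝ :=
  if t < 1 then L₁ t + (1 - t) / 2 else 1

/-!
At `t = 1 - 1/m` the barriers give `L₁ t = (-1)^m / m` and `U₁ t = ((-1)^m + 1/2) / m`, so any `Y`
squeezed between them satisfies `(-1)^m Y(1 - 1/m) ≥ 1/(2m)`: the values of `Y` along the increasing
sequence `1 - 1/m` alternate in sign with amplitude at least `1/(2m)`. Consecutive increments are
therefore at least `1/(2(m+1))`, and the harmonic series diverges.
-/

open scoped ENNReal

theorem eVariationOn.tsum_edist_le {α E : Type*} [LinearOrder α] [PseudoEMetricSpace E]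
    {f : α → E} {s : Set α} {u : ℕ → α} (hu : Monotone u) (us : ∀ n, u n ∈ s) :
    ∑' n, edist (f (u (n + 1))) (f (u n)) ≤ eVariationOn f s := by
  rw [ENNReal.tsum_eq_iSup_nat]
  exact iSup_le fun n ↦ eVariationOn.sum_le hu us

theorem eVariationOn_eq_top_of_not_summable {α E : Type*} [LinearOrder α] [PseudoMetricSpace E]
    {f : α → E} {s : Set α} {u : ℕ → α} (hu : Monotone u) (us : ∀ n, u n ∈ s) {c : ℕ → ℝ}
    (hc0 : ∀ n, 0 ≤ c n) (hc : ¬Summable c) (hcf : ∀ n, c n ≤ dist (f (u (n + 1))) (f (u n))) :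
    eVariationOn f s = ⊤ := by
  have hsum : ∑' n, ((c n).toNNReal : ℝ≥0∞) = ⊤ := by
    rw [ENNReal.tsum_coe_eq_top_iff_not_summable_coe]
    simpa only [Real.coe_toNNReal _ (hc0 _)] using hc
  refine top_le_iff.1 (hsum ▸ le_trans ?_ (eVariationOn.tsum_edist_le hu us))
  refine ENNReal.tsum_le_tsum fun n ↦ ?_
  rw [edist_dist]
  exact ENNReal.ofReal_le_ofReal (hcf n)

theorem L₁_one_sub_inv_natCast {m : ℕ} (hm : m ≠ 0) :
    L₁ (1 - (m : ℝ)⁻¹) = (m : ℝ)⁻¹ * (-1) ^ m := by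
  have hm' : (0 : ℝ) < (m : ℝ)⁻¹ := by positivity
  rw [L₁, if_pos (by linarith), sub_sub_cancel, div_inv_eq_mul, mul_comm π, cos_nat_mul_pi]

theorem U₁_one_sub_inv_natCast {m : ℕ} (hm : m ≠ 0) :
    U₁ (1 - (m : ℝ)⁻¹) = (m : ℝ)⁻¹ * ((-1) ^ m + 1 / 2) := by
  have hm' : (0 : ℝ) < (m : ℝ)⁻¹ := by positivity
  rw [U₁, if_pos (by linarith), L₁_one_sub_inv_natCast hm, sub_sub_cancel]
  ring

theorem le_neg_one_pow_mul_of_L₁_le_of_le_U₁ {m : ℕ} (hm : m ≠ 0) {y : ℝ}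
    (hL : L₁ (1 - (m : ℝ)⁻¹) ≤ y) (hU : y ≤ U₁ (1 - (m : ℝ)⁻¹)) :
    (2 * m : ℝ)⁻¹ ≤ (-1) ^ m * y := by
  rw [L₁_one_sub_inv_natCast hm] at hL
  rw [U₁_one_sub_inv_natCast hm] at hU
  have hm' : (0 : ℝ) < (m : ℝ)⁻¹ := by positivity
  rw [mul_inv]
  rcases m.even_or_odd with he | ho
  · rw [he.neg_one_pow] at hL ⊢
    linarith
  · rw [ho.neg_one_pow] at hU ⊢
    linarith

theorem le_abs_sub_of_neg_one_pow_mul (m : ℕ) {a b ε : ℝ} (ha : 0 ≤ (-1) ^ m * a)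
    (hb : ε ≤ (-1) ^ (m + 1) * b) : ε ≤ |b - a| :=
  calc ε ≤ (-1) ^ (m + 1) * b + (-1) ^ m * a := by linarith
    _ = (-1) ^ (m + 1) * (b - a) := by ring
    _ ≤ |(-1) ^ (m + 1) * (b - a)| := le_abs_self _
    _ = |b - a| := by rw [abs_mul, abs_neg_one_pow, one_mul]

theorem one_sub_inv_natCast_mem_Icc (m : ℕ) : 1 - (m : ℝ)⁻¹ ∈ Icc (0 : ℝ) 1 := by
  rcases m.eq_zero_or_pos with rfl | hm
  · simp
  · have : (m : ℝ)⁻¹ ≤ 1 := inv_le_one_of_one_le₀ (by exact_mod_cast hm)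
    constructor <;> linarith [inv_nonneg.2 (m.cast_nonneg (α := ℝ))]

theorem not_summable_inv_two_mul_add_two : ¬Summable fun n : ℕ ↦ (2 * ((n + 2 : ℕ) : ℝ))⁻¹ := by
  simp_rw [mul_inv]
  rw [summable_mul_left_iff (by norm_num), summable_nat_add_iff 2 (f := fun n : ℕ ↦ (n : ℝ)⁻¹)]
  exact Real.not_summable_natCast_inv

/-- Any function squeezed between the barriers `L₁` and `U₁` on `[0,2]` has
infinite total variation on `[0,1]`. -/
theorem stmt_1 (Y : ℝ → ℝ)
    (hY : ∀ t ∈ Set.Icc (0 : ℝ) 2, L₁ t ≤ Y t ∧ Y t ≤ U₁ t) :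
    eVariationOn Y (Set.Icc (0 : ℝ) 1) = ⊤ := by
  have hsign (m : ℕ) (hm : m ≠ 0) : (2 * m : ℝ)⁻¹ ≤ (-1) ^ m * Y (1 - (m : ℝ)⁻¹) := by
    have hY' := hY _ (Icc_subset_Icc_right one_le_two (one_sub_inv_natCast_mem_Icc m))
    exact le_neg_one_pow_mul_of_L₁_le_of_le_U₁ hm hY'.1 hY'.2
  refine eVariationOn_eq_top_of_not_summable (u := fun n ↦ 1 - ((n + 1 : ℕ) : ℝ)⁻¹)
    (fun a b hab ↦ sub_le_sub_left (inv_anti₀ (by positivity) (by gcongr)) 1)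
    (fun n ↦ one_sub_inv_natCast_mem_Icc _) (fun n ↦ by positivity)
    not_summable_inv_two_mul_add_two fun n ↦ ?_
  rw [Real.dist_eq]
  exact le_abs_sub_of_neg_one_pow_mul (n + 1)
    ((inv_nonneg.2 (by positivity)).trans (hsign (n + 1) n.succ_ne_zero))
    (hsign (n + 2) (by omega))
end

section
/- Let L(t) = -t for t \in [0,1) and L(t) = 0 for t \in [1,2]; let U(t) = t for t \in [0,1) and U(t) = 0 for t \in [1,2]. For every r \in (0,1), the function Y^r defined by Y^r(t) = t for t \in [0,r), Y^r(t) = r for t \in [r,1), and Y^r(t) = 0 for t \in [1,2] satisfies: (i) L(t) \le Y^r(t) \le U(t) for all t \in [0,2]; (ii) Y^r is nondecreasing on [0,1), hence of bounded variation on [0,2]; (iii) Y^r(2) = 0. Consequently, for distinct r, r' \in (0,1), Y^r \ne Y^{r'}. -/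
open Set

/-- Lower barrier of Example 3.2. -/
noncomputable def L₃ (t : ℝ) : ℝ := if t < 1 then -t else 0

/-- Upper barrier of Example 3.2. -/
noncomputable def U₃ (t : ℝ) : ℝ := if t < 1 then t else 0

/-- The family of candidate solutions of Example 3.2. -/
noncomputable def Y₃ (r t : ℝ) : ℝ := if t < r then t else if t < 1 then r else 0

/-!
On `[0, 1)` the function `Y₃ r` is `t ↦ min t r`, and from `1` on it vanishes, so
`Y₃ r = min · r - r • 𝟙[1, ∞)` is a difference of two monotone functions and hence of bounded
variation. Since `min t r` stays in `[-t, t]` and both barriers vanish on `[1, 2]`, it lies between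
the barriers, and `r` is recovered as the value of `Y₃ r` at any point of `[r, 1)`.
-/

section Variation

variable {α E : Type*} [LinearOrder α] [SeminormedAddCommGroup E] {f g : α → E} {s : Set α}

theorem eVariationOn_add_le : eVariationOn (f + g) s ≤ eVariationOn f s + eVariationOn g s := by
  refine iSup_le fun ⟨n, u, hu, us⟩ => ?_
  calc ∑ i ∈ Finset.range n, edist ((f + g) (u (i + 1))) ((f + g) (u i))
      ≤ ∑ i ∈ Finset.range n,
          (edist (f (u (i + 1))) (f (u i)) + edist (g (u (i + 1))) (g (u i))) :=
        Finset.sum_le_sum fun i _ => edist_add_add_le _ _ _ _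
    _ = (∑ i ∈ Finset.range n, edist (f (u (i + 1))) (f (u i)))
        + ∑ i ∈ Finset.range n, edist (g (u (i + 1))) (g (u i)) := Finset.sum_add_distrib
    _ ≤ eVariationOn f s + eVariationOn g s :=
        add_le_add (eVariationOn.sum_le hu us) (eVariationOn.sum_le hu us)

theorem eVariationOn_neg : eVariationOn (-f) s = eVariationOn f s := by
  simp only [eVariationOn, Pi.neg_apply, edist_neg_neg]

theorem BoundedVariationOn.add (hf : BoundedVariationOn f s) (hg : BoundedVariationOn g s) :
    BoundedVariationOn (f + g) s :=
  ne_top_of_le_ne_top (ENNReal.add_ne_top.2 ⟨hf, hg⟩) eVariationOn_add_le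

theorem BoundedVariationOn.neg (hf : BoundedVariationOn f s) : BoundedVariationOn (-f) s := by
  rwa [BoundedVariationOn, eVariationOn_neg]

theorem BoundedVariationOn.sub (hf : BoundedVariationOn f s) (hg : BoundedVariationOn g s) :
    BoundedVariationOn (f - g) s := by
  simpa only [sub_eq_add_neg] using hf.add hg.neg

end Variation

theorem Monotone.boundedVariationOn_Icc {α : Type*} [LinearOrder α] {f : α → ℝ}
    (hf : Monotone f) (a b : α) : BoundedVariationOn f (Icc a b) := by
  simpa only [univ_inter] using (hf.monotoneOn univ).locallyBoundedVariationOn a b trivial trivial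

section Example

variable {r t : ℝ}

theorem L₃_le_Y₃ (hr : 0 ≤ r) (ht : 0 ≤ t) : L₃ t ≤ Y₃ r t := by
  unfold L₃ Y₃
  split_ifs <;> linarith

theorem Y₃_le_U₃ (hr : r ≤ 1) : Y₃ r t ≤ U₃ t := by
  unfold U₃ Y₃
  split_ifs <;> linarith

theorem Y₃_of_one_le (hr : r ≤ 1) (ht : 1 ≤ t) : Y₃ r t = 0 := by
  unfold Y₃
  split_ifs <;> linarith

theorem Y₃_eqOn_min (r : ℝ) : EqOn (Y₃ r) (fun t => min t r) (Iio 1) := by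
  intro t (ht : t < 1)
  unfold Y₃
  split_ifs with htr
  · exact (min_eq_left htr.le).symm
  · exact (min_eq_right (not_lt.1 htr)).symm

theorem monotoneOn_Y₃ (r : ℝ) : MonotoneOn (Y₃ r) (Iio 1) :=
  ((monotone_id.min monotone_const).monotoneOn _).congr (Y₃_eqOn_min r).symm

theorem Y₃_eq_min_sub_step (hr : r ≤ 1) :
    Y₃ r = (fun t => min t r) - fun t => if t < 1 then 0 else r := by
  funext t
  simp only [Y₃, Pi.sub_apply]
  split_ifs <;> grind

theorem boundedVariationOn_Y₃ (hr₀ : 0 ≤ r) (hr₁ : r ≤ 1) (a b : ℝ) :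
    BoundedVariationOn (Y₃ r) (Icc a b) := by
  have step_mono : Monotone fun t : ℝ => if t < 1 then 0 else r := by
    intro x y hxy
    dsimp only
    split_ifs <;> linarith
  rw [Y₃_eq_min_sub_step hr₁]
  exact ((monotone_id.min monotone_const).boundedVariationOn_Icc a b).sub
    (step_mono.boundedVariationOn_Icc a b)

theorem injOn_Y₃ : InjOn Y₃ (Iio 1) := by
  intro r (hr : r < 1) r' (hr' : r' < 1) h
  have hmax : max r r' < 1 := max_lt hr hr'
  have := congrFun h (max r r')
  rw [Y₃_eqOn_min r hmax, Y₃_eqOn_min r' hmax] at this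
  simpa only [min_eq_right (le_max_left r r'), min_eq_right (le_max_right r r')] using this

end Example

/-- For every `r ∈ (0,1)`: (i) `Y₃ r` lies between the barriers on `[0,2]`;
(ii) `Y₃ r` is nondecreasing on `[0,1)` and of bounded variation on `[0,2]`;
(iii) `Y₃ r 2 = 0`.  Moreover distinct `r`'s give distinct functions. -/
theorem stmt_3 :
    (∀ r ∈ Set.Ioo (0 : ℝ) 1,
      (∀ t ∈ Set.Icc (0 : ℝ) 2, L₃ t ≤ Y₃ r t ∧ Y₃ r t ≤ U₃ t) ∧
      MonotoneOn (Y₃ r) (Set.Ico (0 : ℝ) 1) ∧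
      eVariationOn (Y₃ r) (Set.Icc (0 : ℝ) 2) < ⊤ ∧
      Y₃ r 2 = 0) ∧
    (∀ r ∈ Set.Ioo (0 : ℝ) 1, ∀ r' ∈ Set.Ioo (0 : ℝ) 1, r ≠ r' → Y₃ r ≠ Y₃ r') := by
  refine ⟨fun r ⟨hr₀, hr₁⟩ => ⟨?_, ?_, ?_, ?_⟩, fun r hr r' hr' hne h => hne (injOn_Y₃ hr.2 hr'.2 h)⟩
  · exact fun t ht => ⟨L₃_le_Y₃ hr₀.le ht.1, Y₃_le_U₃ hr₁.le⟩
  · exact (monotoneOn_Y₃ r).mono fun t ht => ht.2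
  · exact lt_top_iff_ne_top.2 (boundedVariationOn_Y₃ hr₀.le hr₁.le 0 2)
  · exact Y₃_of_one_le hr₁.le one_le_two
end
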